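/- arXiv:hep-th/0512028 — 2 statements merged into one kernel-verified Lean document; each statement's English description precedes it below -/
import Mathlib

section
/- Let n ≥ 1 be an integer, let l₀, l₁, …, lₙ be nonnegative integers with L := l₀ + l₁ + ⋯ + lₙ = n, and let y₁, …, yₙ be admissible real numbers. Then Φₙ(l₀,…,lₙ; y₁,…,yₙ) = 1. -/
/-- `S y a b = y_a + y_{a+1} + ⋯ + y_b`. -/
noncomputable def S (y : ℕ → ℝ) (a b : ℕ) : ℝ := ∑ t ∈ Finset.Icc a b, y t

/-- `(y₁, …, yₙ)` is admissible if `S(a,b) ≠ 0` for all `1 ≤ a ≤ b ≤ n`. -/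
def Admissible (n : ℕ) (y : ℕ → ℝ) : Prop :=
  ∀ a b : ℕ, 1 ≤ a → a ≤ b → b ≤ n → S y a b ≠ 0

/-- `Φₙ(l₀,…,lₙ; y₁,…,yₙ)`, the pointwise ε→0 value of the distributional sum of
Lemma 1 of the paper. -/
noncomputable def Phi (n : ℕ) (l : ℕ → ℕ) (y : ℕ → ℝ) : ℝ :=
  ∑ m ∈ Finset.range (n + 1),
    (-1 : ℝ) ^ m *
      (∏ r ∈ Finset.range m, (-S y (r + 1) m) ^ l r / S y (r + 1) m) *
      (if l m = 0 then 1 else 0) *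
      (∏ r ∈ Finset.Icc (m + 1) n, (S y (m + 1) r) ^ l r / S y (m + 1) r)

/-!
With `x_k = S(1,k)` (so `x₀ = 0`) one has `S(r+1,m) = x_m - x_r`, and the `m`-th term of `Φₙ`
becomes `P(-x_m) / ∏_{r ≠ m} (x_r - x_m)` for the monic polynomial `P(X) = ∏_r (X + x_r)^{l_r}`
of degree `L = n`; the factor `[l_m = 0]` only records that `P(-x_m) = 0` when `l_m > 0`.
Admissibility makes the nodes `-x₀, …, -xₙ` distinct, so `Φₙ` is the `n`-th divided difference
of `P`, which is its leading coefficient `1`.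
-/

open Finset Polynomial

theorem sum_prod_sub_pow_div_prod_erase_sub_eq_one {F ι : Type*} [Field F] [DecidableEq ι]
    {s : Finset ι} {v : ι → F} (hv : Set.InjOn v s) (l : ι → ℕ) (hl : ∑ i ∈ s, l i + 1 = #s) :
    ∑ i ∈ s, (∏ j ∈ s, (v j - v i) ^ l j) / ∏ j ∈ s.erase i, (v j - v i) = 1 := by
  -- interpolating at the nodes `-v` turns `v i - v j` into `v j - v i`
  set P : F[X] := ∏ j ∈ s, (X - C (-v j)) ^ l j
  have hP : P.Monic := monic_prod_of_monic _ _ fun j _ => (monic_X_sub_C _).pow _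
  have hPdeg : P.natDegree = #s - 1 := by
    rw [natDegree_prod_of_monic _ _ fun j _ => (monic_X_sub_C _).pow _]
    simp only [natDegree_pow, natDegree_X_sub_C, mul_one]
    omega
  have hPlt : P.degree < #s := by
    rw [degree_eq_natDegree hP.ne_zero, hPdeg]
    exact_mod_cast Nat.sub_lt (by omega) one_pos
  have h := Lagrange.coeff_eq_sum (neg_injective.comp_injOn hv) hPlt
  rw [← hPdeg, coeff_natDegree, hP.leadingCoeff] at h
  simpa only [P, eval_prod, eval_pow, eval_sub, eval_X, eval_C, Function.comp_apply, Pi.neg_apply,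
    neg_sub_neg] using h.symm

theorem S_add_one_eq_sub (y : ℕ → ℝ) {r m : ℕ} (h : r ≤ m) :
    S y (r + 1) m = S y 1 m - S y 1 r := by
  have hIcc : ∀ a b : ℕ, Icc (a + 1) b = Ioc a b := Icc_add_one_left_eq_Ioc
  rw [eq_sub_iff_add_eq', S, S, S, hIcc, ← zero_add 1, hIcc, hIcc,
    sum_Ioc_consecutive y (Nat.zero_le r) h]

theorem Admissible.injOn_partialSum {n : ℕ} {y : ℕ → ℝ} (hy : Admissible n y) :
    Set.InjOn (S y 1) (range (n + 1)) := by
  have hne : ∀ a b, a < b → b ≤ n → S y 1 b ≠ S y 1 a := fun a b hab hb heq =>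
    hy (a + 1) b (by omega) hab hb (by rw [S_add_one_eq_sub y hab.le, heq, sub_self])
  intro a ha b hb hab
  simp only [coe_range, Set.mem_Iio] at ha hb
  by_contra hne'
  rcases Nat.lt_or_gt_of_ne hne' with h | h
  · exact hne a b h (by omega) hab.symm
  · exact hne b a h (by omega) hab

theorem neg_one_pow_mul_prod_split_eq_div_prod_erase {F : Type*} [Field F] (l : ℕ → ℕ)
    (d : ℕ → F) {m n : ℕ} (hm : m ≤ n) (hd : d m = 0) :
    (-1) ^ m * (∏ r ∈ range m, d r ^ l r / -d r) * (if l m = 0 then 1 else 0) *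
        ∏ r ∈ Icc (m + 1) n, d r ^ l r / d r =
      (∏ r ∈ range (n + 1), d r ^ l r) / ∏ r ∈ (range (n + 1)).erase m, d r := by
  have herase : (range (n + 1)).erase m = range m ∪ Icc (m + 1) n := by
    ext r
    simp only [mem_erase, mem_range, mem_union, mem_Icc]
    omega
  have hdisj : Disjoint (range m) (Icc (m + 1) n) :=
    disjoint_left.mpr fun r hr hr' => by simp only [mem_range, mem_Icc] at hr hr'; omega
  have hsign : ∏ r ∈ range m, d r ^ l r / -d r = (-1) ^ m * ∏ r ∈ range m, d r ^ l r / d r := by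
    simp only [div_neg, prod_neg, card_range]
  have hsq : ((-1 : F) ^ m) * (-1) ^ m = 1 := by rw [← mul_pow]; norm_num
  rw [← mul_prod_erase _ _ (mem_range.mpr (Nat.lt_succ_of_le hm)), hd, zero_pow_eq, mul_div_assoc,
    ← prod_div_distrib, herase, prod_union hdisj, hsign]
  linear_combination ((if l m = 0 then 1 else 0) * (∏ r ∈ range m, d r ^ l r / d r) *
    ∏ r ∈ Icc (m + 1) n, d r ^ l r / d r) * hsq

theorem Phi_eq_sum_div_prod_erase (n : ℕ) (l : ℕ → ℕ) (y : ℕ → ℝ) :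
    Phi n l y = ∑ m ∈ range (n + 1), (∏ r ∈ range (n + 1), (S y 1 r - S y 1 m) ^ l r) /
      ∏ r ∈ (range (n + 1)).erase m, (S y 1 r - S y 1 m) := by
  refine sum_congr rfl fun m hm => ?_
  have hA : ∀ r ∈ range m, (-S y (r + 1) m) ^ l r / S y (r + 1) m =
      (S y 1 r - S y 1 m) ^ l r / -(S y 1 r - S y 1 m) := fun r hr => by
    rw [S_add_one_eq_sub y (mem_range.mp hr).le, neg_sub, neg_sub]
  have hB : ∀ r ∈ Icc (m + 1) n, S y (m + 1) r ^ l r / S y (m + 1) r =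
      (S y 1 r - S y 1 m) ^ l r / (S y 1 r - S y 1 m) := fun r hr => by
    rw [S_add_one_eq_sub y (by simp only [mem_Icc] at hr; omega)]
  rw [prod_congr rfl hA, prod_congr rfl hB, neg_one_pow_mul_prod_split_eq_div_prod_erase l _
    (Nat.lt_succ_iff.mp (mem_range.mp hm)) (sub_self _)]

theorem Phi_eq_one_of_sum_eq_general (n : ℕ) (l : ℕ → ℕ) (y : ℕ → ℝ)
    (hL : ∑ r ∈ Finset.range (n + 1), l r = n)
    (hy : Admissible n y) :
    Phi n l y = 1 := by
  rw [Phi_eq_sum_div_prod_erase]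
  exact sum_prod_sub_pow_div_prod_erase_sub_eq_one hy.injOn_partialSum l (by rw [hL, card_range])

/-- if `L = l₀ + ⋯ + lₙ = n` then `Φₙ(l₀,…,lₙ; y₁,…,yₙ) = 1` for
every admissible tuple `(y₁,…,yₙ)`. -/
theorem Phi_eq_one_of_sum_eq (n : ℕ) (hn : 1 ≤ n) (l : ℕ → ℕ) (y : ℕ → ℝ)
    (hL : ∑ r ∈ Finset.range (n + 1), l r = n)
    (hy : Admissible n y) :
    Phi n l y = 1 :=
  Phi_eq_one_of_sum_eq_general n l y hL hy
end

section
/- Let n ≥ 3 be an integer, let l₀, …, lₙ be nonnegative integers, and let (y₁,…,yₙ) be an admissible tuple of real numbers. Then the following recursion holds: Φₙ(l₀,…,lₙ; y₁,…,yₙ) = [l_{n−1} = 0] · (yₙ^{lₙ}/yₙ) · Φ_{n−1}(l₀,…,l_{n−2},0; y₁,…,y_{n−1}) − [lₙ = 0] · ((−yₙ)^{l_{n−1}}/yₙ) · Φ_{n−1}(l₀,…,l_{n−2},0; y₁,…,y_{n−2}, y_{n−1}+yₙ) + ∑_{m=0}^{n−2} (−1)^m · (∏_{r=0}^{m−1}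 (−S(r+1,m))^{l_r}/S(r+1,m)) · [l_m = 0] · (∏_{r=m+1}^{n−2} S(m+1,r)^{l_r}/S(m+1,r)) · Φ₂(0, l_{n−1}, lₙ; S(m+1,n−1), yₙ). -/
/-!
Split off the summands `m = n - 1` and `m = n` of `Φₙ`. The former is `yₙ^{lₙ}/yₙ` times the
top summand of `Φₙ₋₁(…; y₁, …, yₙ₋₁)`; the latter is `-(-yₙ)^{lₙ₋₁}/yₙ` times the top summand
of `Φₙ₋₁(…; y₁, …, yₙ₋₂, yₙ₋₁ + yₙ)`, because merging the last two variables turns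
`S(r+1, n)` into `S(r+1, n-1)`. For `m ≤ n - 2` the last two factors of the summand are
`a^{lₙ₋₁}/a · (a+b)^{lₙ}/(a+b)` with `a = S(m+1, n-1)`, `b = yₙ`: the first summand of
`Φ₂(0, lₙ₋₁, lₙ; a, b)`, whose other two summands cancel the `m`-th summands of the two
`Φₙ₋₁` terms.
-/

open Finset

section

variable (l : ℕ → ℕ) (y : ℕ → ℝ)

lemma S_self (a : ℕ) : S y a a = y a := by simp [S]

lemma S_succ_right {a b : ℕ} (h : a ≤ b + 1) : S y a (b + 1) = S y a b + y (b + 1) :=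
  sum_Icc_succ_top h y

lemma S_congr {y' : ℕ → ℝ} {a b : ℕ} (h : ∀ t ≤ b, y t = y' t) : S y a b = S y' a b :=
  sum_congr rfl fun t ht => h t (mem_Icc.1 ht).2

def zeroAt (k r : ℕ) : ℕ := if r = k then 0 else l r

lemma zeroAt_self (k : ℕ) : zeroAt l k k = 0 := if_pos rfl

lemma zeroAt_of_ne {k r : ℕ} (h : r ≠ k) : zeroAt l k r = l r := if_neg h

def mergeAt (k t : ℕ) : ℝ := if t = k then y k + y (k + 1) else y t

lemma mergeAt_of_ne {k t : ℕ} (h : t ≠ k) : mergeAt y k t = y t := if_neg h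

lemma S_mergeAt_self {a k : ℕ} (h : a ≤ k) : S (mergeAt y k) a k = S y a (k + 1) := by
  have hz : mergeAt y k = fun t => y t + if t = k then y (k + 1) else 0 := by
    funext t; simp only [mergeAt]; split_ifs with ht <;> simp [ht]
  rw [S_succ_right y (by omega), hz, S, sum_add_distrib, sum_ite_eq',
    if_pos (mem_Icc.2 ⟨h, le_rfl⟩)]
  rfl

noncomputable def leftFactor (m : ℕ) : ℝ :=
  (-1 : ℝ) ^ m * (∏ r ∈ range m, (-S y (r + 1) m) ^ l r / S y (r + 1) m) *
    (if l m = 0 then 1 else 0)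

noncomputable def rightFactor (n m : ℕ) : ℝ :=
  ∏ r ∈ Icc (m + 1) n, S y (m + 1) r ^ l r / S y (m + 1) r

lemma Phi_eq_sum (n : ℕ) :
    Phi n l y = ∑ m ∈ range (n + 1), leftFactor l y m * rightFactor l y n m := rfl

lemma leftFactor_congr {l' : ℕ → ℕ} {y' : ℕ → ℝ} {m : ℕ} (hl : ∀ r ≤ m, l r = l' r)
    (hy : ∀ t ≤ m, y t = y' t) : leftFactor l y m = leftFactor l' y' m := by
  unfold leftFactor
  rw [hl m le_rfl]
  congr 2
  refine prod_congr rfl fun r hr => ?_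
  rw [hl r (mem_range.1 hr).le, S_congr y hy]

lemma rightFactor_congr {l' : ℕ → ℕ} {y' : ℕ → ℝ} {n m : ℕ}
    (hl : ∀ r ∈ Icc (m + 1) n, l r = l' r) (hy : ∀ t ≤ n, y t = y' t) :
    rightFactor l y n m = rightFactor l' y' n m :=
  prod_congr rfl fun r hr => by
    rw [hl r hr, S_congr y fun t ht => hy t (ht.trans (mem_Icc.1 hr).2)]

lemma rightFactor_self (m : ℕ) : rightFactor l y m m = 1 := by
  simp [rightFactor]

lemma rightFactor_succ {n m : ℕ} (h : m ≤ n) :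
    rightFactor l y (n + 1) m =
      rightFactor l y n m * (S y (m + 1) (n + 1) ^ l (n + 1) / S y (m + 1) (n + 1)) :=
  prod_Icc_succ_top (by omega) _

lemma Phi_succ (n : ℕ) :
    Phi (n + 1) l y =
      ∑ m ∈ range (n + 1), leftFactor l y m * rightFactor l y n m *
          (S y (m + 1) (n + 1) ^ l (n + 1) / S y (m + 1) (n + 1))
        + leftFactor l y (n + 1) := by
  rw [Phi_eq_sum, sum_range_succ, rightFactor_self, mul_one]
  congr 1
  refine sum_congr rfl fun m hm => ?_
  rw [rightFactor_succ l y (Nat.lt_succ_iff.1 (mem_range.1 hm)), mul_assoc]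

lemma leftFactor_eq_ite_mul_zeroAt (k : ℕ) :
    leftFactor l y k = (if l k = 0 then 1 else 0) * leftFactor (zeroAt l k) y k := by
  have hprod : ∏ r ∈ range k, (-S y (r + 1) k) ^ zeroAt l k r / S y (r + 1) k =
      ∏ r ∈ range k, (-S y (r + 1) k) ^ l r / S y (r + 1) k :=
    prod_congr rfl fun r hr => by rw [zeroAt_of_ne l (mem_range.1 hr).ne]
  unfold leftFactor
  rw [hprod, zeroAt_self, if_pos rfl]
  ring

lemma leftFactor_succ (k : ℕ) :
    leftFactor l y (k + 1) =
      -(if l (k + 1) = 0 then 1 else 0) * ((-y (k + 1)) ^ l k / y (k + 1)) *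
        leftFactor (zeroAt l k) (mergeAt y k) k := by
  have hprod : ∏ r ∈ range k, (-S y (r + 1) (k + 1)) ^ l r / S y (r + 1) (k + 1) =
      ∏ r ∈ range k, (-S (mergeAt y k) (r + 1) k) ^ zeroAt l k r / S (mergeAt y k) (r + 1) k :=
    prod_congr rfl fun r hr => by
      have := mem_range.1 hr
      rw [S_mergeAt_self y (by omega), zeroAt_of_ne l (by omega)]
  unfold leftFactor
  rw [prod_range_succ, S_self, hprod, zeroAt_self, if_pos rfl, pow_succ]
  ring

lemma Phi_two (p q : ℕ) (a b : ℝ) :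
    Phi 2 (fun r => if r = 1 then p else if r = 2 then q else 0)
        (fun t => if t = 1 then a else b) =
      a ^ p / a * ((a + b) ^ q / (a + b)) - (if p = 0 then 1 else 0) * (1 / a) * (b ^ q / b)
        + (if q = 0 then 1 else 0) * (1 / (a + b)) * ((-b) ^ p / b) := by
  set z : ℕ → ℝ := fun t => if t = 1 then a else b
  have h11 : S z 1 1 = a := S_self z 1
  have h22 : S z 2 2 = b := S_self z 2
  have h12 : S z 1 2 = a + b := by rw [S_succ_right z (by norm_num), h11]; rfl
  simp only [Phi, sum_range_succ, prod_range_succ, sum_range_zero, prod_range_zero,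
    show Icc 1 2 = {1, 2} from rfl, show Icc 2 2 = {2} from rfl, show Icc 3 2 = ∅ from rfl,
    prod_pair (show 1 ≠ 2 by norm_num), prod_singleton, prod_empty, Nat.reduceAdd, reduceIte,
    h11, h22, h12]
  norm_num
  split_ifs <;> ring

lemma leftFactor_mergeAt_of_lt {k m : ℕ} (h : m < k) :
    leftFactor l (mergeAt y k) m = leftFactor l y m :=
  leftFactor_congr _ _ (fun _ _ => rfl) fun t ht => mergeAt_of_ne y (by omega)

lemma rightFactor_mergeAt_of_lt {k n m : ℕ} (h : n < k) :
    rightFactor l (mergeAt y k) n m = rightFactor l y n m :=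
  rightFactor_congr _ _ (fun _ _ => rfl) fun t ht => mergeAt_of_ne y (by omega)

lemma Phi_succ_zeroAt (n : ℕ) :
    Phi (n + 1) (zeroAt l (n + 1)) y =
      ∑ m ∈ range (n + 1), leftFactor l y m * rightFactor l y n m / S y (m + 1) (n + 1)
        + leftFactor (zeroAt l (n + 1)) y (n + 1) := by
  rw [Phi_succ]
  congr 1
  refine sum_congr rfl fun m hm => ?_
  have hm := mem_range.1 hm
  rw [zeroAt_self, pow_zero, mul_one_div,
    leftFactor_congr _ _ (fun r hr => zeroAt_of_ne l (by omega)) fun _ _ => rfl,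
    rightFactor_congr _ _ (fun r hr => zeroAt_of_ne l (by have := (mem_Icc.1 hr).2; omega))
      fun _ _ => rfl]

lemma Phi_succ_zeroAt_mergeAt (n : ℕ) :
    Phi (n + 1) (zeroAt l (n + 1)) (mergeAt y (n + 1)) =
      ∑ m ∈ range (n + 1), leftFactor l y m * rightFactor l y n m / S y (m + 1) (n + 2)
        + leftFactor (zeroAt l (n + 1)) (mergeAt y (n + 1)) (n + 1) := by
  rw [Phi_succ_zeroAt]
  congr 1
  refine sum_congr rfl fun m hm => ?_
  have hm := mem_range.1 hm
  rw [leftFactor_mergeAt_of_lt l y hm, rightFactor_mergeAt_of_lt l y (Nat.lt_succ_self n),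
    S_mergeAt_self y (by omega)]

lemma Phi_add_two_eq_sum (N : ℕ) :
    Phi (N + 2) l y =
      ∑ m ∈ range (N + 1), leftFactor l y m * rightFactor l y N m *
          (S y (m + 1) (N + 1) ^ l (N + 1) / S y (m + 1) (N + 1)) *
          (S y (m + 1) (N + 2) ^ l (N + 2) / S y (m + 1) (N + 2))
        + leftFactor l y (N + 1) * (y (N + 2) ^ l (N + 2) / y (N + 2))
        + leftFactor l y (N + 2) := by
  rw [Phi_succ, sum_range_succ, rightFactor_self, S_self, mul_one]
  congr 2
  refine sum_congr rfl fun m hm => ?_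
  rw [rightFactor_succ l y (Nat.lt_succ_iff.1 (mem_range.1 hm))]
  ring

theorem Phi_add_two (N : ℕ) :
    Phi (N + 2) l y =
      (if l (N + 1) = 0 then 1 else 0) * (y (N + 2) ^ l (N + 2) / y (N + 2)) *
          Phi (N + 1) (zeroAt l (N + 1)) y
      - (if l (N + 2) = 0 then 1 else 0) * ((-y (N + 2)) ^ l (N + 1) / y (N + 2)) *
          Phi (N + 1) (zeroAt l (N + 1)) (mergeAt y (N + 1))
      + ∑ m ∈ range (N + 1), leftFactor l y m * rightFactor l y N m *
          Phi 2 (fun r => if r = 1 then l (N + 1) else if r = 2 then l (N + 2) else 0)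
            (fun t => if t = 1 then S y (m + 1) (N + 1) else y (N + 2)) := by
  have hterm : ∀ m ∈ range (N + 1),
      leftFactor l y m * rightFactor l y N m *
          (S y (m + 1) (N + 1) ^ l (N + 1) / S y (m + 1) (N + 1)) *
          (S y (m + 1) (N + 2) ^ l (N + 2) / S y (m + 1) (N + 2)) =
        (if l (N + 1) = 0 then 1 else 0) * (y (N + 2) ^ l (N + 2) / y (N + 2)) *
            (leftFactor l y m * rightFactor l y N m / S y (m + 1) (N + 1))
          - (if l (N + 2) = 0 then 1 else 0) * ((-y (N + 2)) ^ l (N + 1) / y (N + 2)) *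
            (leftFactor l y m * rightFactor l y N m / S y (m + 1) (N + 2))
          + leftFactor l y m * rightFactor l y N m *
            Phi 2 (fun r => if r = 1 then l (N + 1) else if r = 2 then l (N + 2) else 0)
              (fun t => if t = 1 then S y (m + 1) (N + 1) else y (N + 2)) := fun m hm => by
    rw [Phi_two, S_succ_right y (show m + 1 ≤ N + 1 + 1 by have := mem_range.1 hm; omega)]
    ring
  rw [Phi_add_two_eq_sum, Phi_succ_zeroAt, Phi_succ_zeroAt_mergeAt,
    leftFactor_eq_ite_mul_zeroAt l y (N + 1), leftFactor_succ l y (N + 1), sum_congr rfl hterm,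
    sum_add_distrib, sum_sub_distrib, ← mul_sum, ← mul_sum]
  ring

end

theorem Phi_recursion_general (n : ℕ) (hn : 3 ≤ n) (l : ℕ → ℕ) (y : ℕ → ℝ) :
    Phi n l y =
      (if l (n - 1) = 0 then 1 else 0) * (y n ^ l n / y n) *
          Phi (n - 1) (fun r => if r = n - 1 then 0 else l r) y
      - (if l n = 0 then 1 else 0) * ((-y n) ^ l (n - 1) / y n) *
          Phi (n - 1) (fun r => if r = n - 1 then 0 else l r)
            (fun t => if t = n - 1 then y (n - 1) + y n else y t)
      + ∑ m ∈ Finset.range (n - 1),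
          (-1 : ℝ) ^ m *
            (∏ r ∈ Finset.range m, (-S y (r + 1) m) ^ l r / S y (r + 1) m) *
            (if l m = 0 then 1 else 0) *
            (∏ r ∈ Finset.Icc (m + 1) (n - 2),
              (S y (m + 1) r) ^ l r / S y (m + 1) r) *
            Phi 2 (fun r => if r = 1 then l (n - 1) else if r = 2 then l n else 0)
              (fun t => if t = 1 then S y (m + 1) (n - 1) else y n) := by
  obtain ⟨N, rfl⟩ : ∃ N, n = N + 2 := ⟨n - 2, by omega⟩
  rw [show N + 2 - 1 = N + 1 by omega, show N + 2 - 2 = N by omega]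
  exact Phi_add_two l y N

/-- the recursion for `Φₙ`, `n ≥ 3`:
`Φₙ(l₀,…,lₙ; y₁,…,yₙ)
  = [l_{n−1} = 0] (yₙ^{lₙ}/yₙ) Φ_{n−1}(l₀,…,l_{n−2},0; y₁,…,y_{n−1})
  − [lₙ = 0] ((−yₙ)^{l_{n−1}}/yₙ) Φ_{n−1}(l₀,…,l_{n−2},0; y₁,…,y_{n−2},y_{n−1}+yₙ)
  + ∑_{m=0}^{n−2} (−1)^m (∏_{r<m} (−S(r+1,m))^{l_r}/S(r+1,m)) [l_m = 0]
      (∏_{r=m+1}^{n−2} S(m+1,r)^{l_r}/S(m+1,r)) Φ₂(0,l_{n−1},lₙ; S(m+1,n−1), yₙ)`. -/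
theorem Phi_recursion (n : ℕ) (hn : 3 ≤ n) (l : ℕ → ℕ) (y : ℕ → ℝ)
    (hy : Admissible n y) :
    Phi n l y =
      (if l (n - 1) = 0 then 1 else 0) * (y n ^ l n / y n) *
          Phi (n - 1) (fun r => if r = n - 1 then 0 else l r) y
      - (if l n = 0 then 1 else 0) * ((-y n) ^ l (n - 1) / y n) *
          Phi (n - 1) (fun r => if r = n - 1 then 0 else l r)
            (fun t => if t = n - 1 then y (n - 1) + y n else y t)
      + ∑ m ∈ Finset.range (n - 1),
          (-1 : ℝ) ^ m *
            (∏ r ∈ Finset.range m, (-S y (r + 1) m) ^ l r / S y (r + 1) m) *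
            (if l m = 0 then 1 else 0) *
            (∏ r ∈ Finset.Icc (m + 1) (n - 2),
              (S y (m + 1) r) ^ l r / S y (m + 1) r) *
            Phi 2 (fun r => if r = 1 then l (n - 1) else if r = 2 then l n else 0)
              (fun t => if t = 1 then S y (m + 1) (n - 1) else y n) :=
  Phi_recursion_general n hn l y
end
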